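/- arXiv:1412.1671 — 2 statements merged into one kernel-verified Lean document; each statement's English description precedes it below -/
import Mathlib

section
/- Completeness of the chase rules with respect to entailment: let (Σ, I) be an incomplete database over schema R with Σ a finite set of inclusion dependencies and tuple-generating dependencies, and let f be a ground fact over R. If Σ ∪ I ⊨ f (f is FO-entailed by Σ ∪ I), then Σ ∪ I ⊢_R f (f is derivable from Σ and I modulo the chase rules). -/
/-! Formalization of incomplete databases, IDs/TGDs, chase rules, derivability,
chase sequences, FO structures & entailment, and (unions of) conjunctive queries. -/

namespace ChaseBagSet

/-- A ground fact `R(c⃗)` over schema `(Rel, arity)` and domain `Dom`. -/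
structure Fact (Rel : Type) (arity : Rel → ℕ) (Dom : Type) where
  rel : Rel
  args : Fin (arity rel) → Dom

/-- The constants occurring in a fact. -/
def Fact.consts {Rel : Type} {arity : Rel → ℕ} {Dom : Type}
    (f : Fact Rel arity Dom) : Set Dom :=
  Set.range f.args

/-- The active domain of an instance: constants occurring among its facts. -/
def adom {Rel : Type} {arity : Rel → ℕ} {Dom : Type}
    (I : Set (Fact Rel arity Dom)) : Set Dom :=
  {c | ∃ f ∈ I, c ∈ f.consts}

/-- Dependencies: inclusion dependencies `∀x⃗ (R(x⃗) → R'(x⃗))` and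
tuple-generating dependencies `∀x⃗ (R(x⃗) → ∃y⃗ R'(x⃗, y⃗))`. -/
inductive Dep (Rel : Type) (arity : Rel → ℕ) : Type
  | id  (R R' : Rel) (h : arity R' = arity R)
  | tgd (R R' : Rel) (m : ℕ) (h : arity R' = arity R + m)

/-- Predicate: the dependency is an inclusion dependency. -/
def Dep.isID {Rel : Type} {arity : Rel → ℕ} : Dep Rel arity → Prop
  | .id _ _ _ => True
  | .tgd _ _ _ _ => False

/-- A first-order relational structure over the schema, interpreting each
relation symbol and each domain constant. -/
structure Struc (Rel : Type) (arity : Rel → ℕ) (Dom : Type) : Type 1 where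
  carrier : Type
  interp : ∀ R : Rel, (Fin (arity R) → carrier) → Prop
  constMap : Dom → carrier

variable {Rel : Type} {arity : Rel → ℕ} {Dom : Type}

/-- A structure satisfies a ground fact. -/
def Struc.satFact (M : Struc Rel arity Dom) (f : Fact Rel arity Dom) : Prop :=
  M.interp f.rel (fun i => M.constMap (f.args i))

/-- A structure satisfies a dependency (as a first-order sentence). -/
def Struc.satDep (M : Struc Rel arity Dom) : Dep Rel arity → Prop
  | .id R R' h => ∀ t : Fin (arity R) → M.carrier,
      M.interp R t → M.interp R' (fun i => t (Fin.cast h i))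
  | .tgd R R' m h => ∀ t : Fin (arity R) → M.carrier,
      M.interp R t → ∃ s : Fin m → M.carrier,
        M.interp R' (fun i => Fin.append t s (Fin.cast h i))

/-- `M` is a model of `Σ ∪ I`. -/
def isModel (Sg : Set (Dep Rel arity)) (I : Set (Fact Rel arity Dom))
    (M : Struc Rel arity Dom) : Prop :=
  (∀ d ∈ Sg, M.satDep d) ∧ (∀ f ∈ I, M.satFact f)

/-- First-order entailment of a ground fact: `Σ ∪ I ⊨ f`. -/
def entailsFact (Sg : Set (Dep Rel arity)) (I : Set (Fact Rel arity Dom))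
    (f : Fact Rel arity Dom) : Prop :=
  ∀ M : Struc Rel arity Dom, isModel Sg I M → M.satFact f

/-- The canonical structure of a (possibly infinite) instance `J`. -/
def strucOf (J : Set (Fact Rel arity Dom)) : Struc Rel arity Dom where
  carrier := Dom
  interp := fun R t => Fact.mk R t ∈ J
  constMap := id

/-- The ID chase rule: from `R(c⃗)` and `∀x⃗ (R(x⃗) → R'(x⃗))` derive `R'(c⃗)`. -/
def idStep (Sg : Set (Dep Rel arity)) (f f' : Fact Rel arity Dom) : Prop :=
  ∃ (R R' : Rel) (h : arity R' = arity R) (t : Fin (arity R) → Dom),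
    Dep.id R R' h ∈ Sg ∧ f = Fact.mk R t ∧
    f' = Fact.mk R' (fun i => t (Fin.cast h i))

/-- The TGD chase rule: from `R(c⃗)` and `∀x⃗ (R(x⃗) → ∃y⃗ R'(x⃗,y⃗))` derive
`R'(c⃗, c⃗ₙₑw)` where `c⃗ₙₑw` are (pairwise distinct) fresh constants, i.e.
avoiding the set `avoid` of previously occurring constants. -/
def tgdStep (Sg : Set (Dep Rel arity)) (avoid : Set Dom)
    (f f' : Fact Rel arity Dom) : Prop :=
  ∃ (R R' : Rel) (m : ℕ) (h : arity R' = arity R + m)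
    (t : Fin (arity R) → Dom) (s : Fin m → Dom),
    Dep.tgd R R' m h ∈ Sg ∧ f = Fact.mk R t ∧
    Function.Injective s ∧ (∀ k, s k ∉ avoid) ∧
    f' = Fact.mk R' (fun i => Fin.append t s (Fin.cast h i))

/-- A chase rule application. -/
def chaseStep (Sg : Set (Dep Rel arity)) (avoid : Set Dom)
    (f f' : Fact Rel arity Dom) : Prop :=
  idStep Sg f f' ∨ tgdStep Sg avoid f f'

/-- `Σ ∪ I ⊢_R f` : `f` is derivable from `Σ` and `I` modulo the chase rules,
i.e. `f ∈ I` or there is a finite sequence `f₀, …, f_n` with `f_n = f` such that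
each `f_i` is in `I` or follows from some earlier `f_j` and a dependency of `Σ`
by a chase rule (the TGD rule introducing constants fresh w.r.t. `I` and the
earlier facts of the sequence). -/
def derives (Sg : Set (Dep Rel arity)) (I : Set (Fact Rel arity Dom))
    (f : Fact Rel arity Dom) : Prop :=
  f ∈ I ∨ ∃ (n : ℕ) (fs : Fin (n + 1) → Fact Rel arity Dom),
    fs (Fin.last n) = f ∧
    ∀ i : Fin (n + 1), fs i ∈ I ∨
      ∃ j : Fin (n + 1), j < i ∧
        chaseStep Sg
          (adom I ∪ {c | ∃ j' : Fin (n + 1), j' < i ∧ c ∈ (fs j').consts})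
          (fs j) (fs i)

/-- A chase sequence for `(Σ, I)`: `level 0 = I`; each next level adds one fact
following from the current level by a chase rule (with fresh constants for TGDs),
and rules are applied fairly: every applicable rule instance is eventually fired. -/
structure ChaseSeq (Sg : Set (Dep Rel arity)) (I : Set (Fact Rel arity Dom)) where
  level : ℕ → Set (Fact Rel arity Dom)
  zero : level 0 = I
  succ : ∀ i : ℕ, level (i + 1) = level i ∨
    ∃ fnew : Fact Rel arity Dom,
      (∃ g ∈ level i, chaseStep Sg (adom (level i)) g fnew) ∧
      level (i + 1) = level i ∪ {fnew}
  fairID : ∀ (i : ℕ) (f f' : Fact Rel arity Dom),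
    f ∈ level i → idStep Sg f f' → ∃ j : ℕ, f' ∈ level j
  fairTGD : ∀ (i : ℕ) (R R' : Rel) (m : ℕ) (h : arity R' = arity R + m)
    (t : Fin (arity R) → Dom),
    Dep.tgd R R' m h ∈ Sg → Fact.mk R t ∈ level i →
    ∃ (j : ℕ) (s : Fin m → Dom),
      Fact.mk R' (fun k => Fin.append t s (Fin.cast h k)) ∈ level j

/-- `chase(Σ, I) := ⋃ᵢ chaseᵢ(Σ, I)`. -/
def ChaseSeq.chase {Sg : Set (Dep Rel arity)} {I : Set (Fact Rel arity Dom)}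
    (C : ChaseSeq Sg I) : Set (Fact Rel arity Dom) :=
  ⋃ i : ℕ, C.level i

/-- A relational atom over the schema whose arguments are variables (from `V`)
or constants (from `Dom`). -/
structure Atom (Rel : Type) (arity : Rel → ℕ) (Dom V : Type) where
  rel : Rel
  args : Fin (arity rel) → V ⊕ Dom

/-- Grounding an atom by `γ : Var(q) → Dom`. -/
def Atom.ground {V : Type} (γ : V → Dom) (a : Atom Rel arity Dom V) :
    Fact Rel arity Dom :=
  Fact.mk a.rel (fun i => Sum.elim γ id (a.args i))

/-- A union of conjunctive queries `q(x⃗) ← φ₀ ∨ … ∨ φ_k` of arity `n`, with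
variables from `V`: a head tuple of distinguished variables and a nonempty
finite disjunction of conjunctions of atoms. -/
structure UCQ (Rel : Type) (arity : Rel → ℕ) (Dom V : Type) (n : ℕ) where
  head : Fin n → V
  body : List (List (Atom Rel arity Dom V))
  body_nonempty : body ≠ []

/-- A conjunctive query `q(x⃗) ← φ` of arity `n`. -/
structure CQ (Rel : Type) (arity : Rel → ℕ) (Dom V : Type) (n : ℕ) where
  head : Fin n → V
  body : List (Atom Rel arity Dom V)

/-- `J ⊨ qγ` for a (possibly infinite) instance `J`: all facts of at least one
grounded disjunct of `qγ` belong to `J`. -/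
def instSatUCQ {V : Type} {n : ℕ} (J : Set (Fact Rel arity Dom))
    (q : UCQ Rel arity Dom V n) (γ : V → Dom) : Prop :=
  ∃ φ ∈ q.body, ∀ a ∈ φ, Atom.ground γ a ∈ J

/-- `M ⊨ qγ` for a structure `M`. -/
def Struc.satUCQ {V : Type} {n : ℕ} (M : Struc Rel arity Dom)
    (q : UCQ Rel arity Dom V n) (γ : V → Dom) : Prop :=
  ∃ φ ∈ q.body, ∀ a ∈ φ, M.satFact (Atom.ground γ a)

/-- `Σ ∪ I ⊨ qγ`: the grounded UCQ is first-order entailed by `Σ ∪ I`. -/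
def entailsUCQ {V : Type} {n : ℕ} (Sg : Set (Dep Rel arity))
    (I : Set (Fact Rel arity Dom)) (q : UCQ Rel arity Dom V n)
    (γ : V → Dom) : Prop :=
  ∀ M : Struc Rel arity Dom, isModel Sg I M → M.satUCQ q γ

/-- `J ⊨ qγ` for a CQ `q` and an instance `J`. -/
def instSatCQ {V : Type} {n : ℕ} (J : Set (Fact Rel arity Dom))
    (q : CQ Rel arity Dom V n) (γ : V → Dom) : Prop :=
  ∀ a ∈ q.body, Atom.ground γ a ∈ J

/-- `M ⊨ qγ` for a CQ `q` and a structure `M`. -/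
def Struc.satCQ {V : Type} {n : ℕ} (M : Struc Rel arity Dom)
    (q : CQ Rel arity Dom V n) (γ : V → Dom) : Prop :=
  ∀ a ∈ q.body, M.satFact (Atom.ground γ a)

/-- `Σ ∪ I ⊨ qγ` for a CQ `q`. -/
def entailsCQ {V : Type} {n : ℕ} (Sg : Set (Dep Rel arity))
    (I : Set (Fact Rel arity Dom)) (q : CQ Rel arity Dom V n)
    (γ : V → Dom) : Prop :=
  ∀ M : Struc Rel arity Dom, isModel Sg I M → M.satCQ q γ


section Aux
variable {Rel Dom : Type} {arity : Rel → ℕ}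

lemma adom_finite {I : Set (Fact Rel arity Dom)} (hI : I.Finite) :
    (adom I).Finite := by
  have h : adom I = ⋃ f ∈ I, Set.range f.args := by
    ext c; simp [adom, Fact.consts]
  rw [h]
  exact hI.biUnion fun f _ => Set.finite_range _

lemma chaseStep_mono {Sg : Set (Dep Rel arity)} {avoid avoid' : Set Dom}
    {f f' : Fact Rel arity Dom} (hsub : avoid' ⊆ avoid)
    (h : chaseStep Sg avoid f f') : chaseStep Sg avoid' f f' := by
  rcases h with h | ⟨R, R', m, hm, t, s, hmem, hf, hinj, hfresh, hf'⟩
  · exact Or.inl h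
  · exact Or.inr ⟨R, R', m, hm, t, s, hmem, hf, hinj,
      fun k hk => hfresh k (hsub hk), hf'⟩

lemma exists_fresh [Infinite Dom] (avoid : Set Dom) (hfin : avoid.Finite)
    (m : ℕ) : ∃ s : Fin m → Dom, Function.Injective s ∧ ∀ k, s k ∉ avoid := by
  have hinf : avoidᶜ.Infinite := hfin.infinite_compl
  haveI := hinf.to_subtype
  let e : Fin m ↪ ↥avoidᶜ := (Fin.valEmbedding).trans (Infinite.natEmbedding _)
  refine ⟨fun k => (e k : Dom), ?_, fun k => (e k).property⟩
  intro a b hab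
  exact e.injective (Subtype.ext hab)

lemma derives_extend [Infinite Dom] {Sg : Set (Dep Rel arity)}
    {I : Set (Fact Rel arity Dom)} (hI : I.Finite)
    {f : Fact Rel arity Dom} (hd : derives Sg I f)
    (Q : Fact Rel arity Dom → Prop)
    (h : ∀ avoid : Set Dom, avoid.Finite →
      ∃ f', chaseStep Sg avoid f f' ∧ Q f') :
    ∃ f', Q f' ∧ derives Sg I f' := by
  obtain ⟨n, fs, hlast, hcond⟩ :
      ∃ (n : ℕ) (fs : Fin (n + 1) → Fact Rel arity Dom),
        fs (Fin.last n) = f ∧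
        ∀ i : Fin (n + 1), fs i ∈ I ∨
          ∃ j : Fin (n + 1), j < i ∧
            chaseStep Sg
              (adom I ∪ {c | ∃ j' : Fin (n + 1), j' < i ∧ c ∈ (fs j').consts})
              (fs j) (fs i) := by
    rcases hd with hf | ⟨n, fs, hlast, hcond⟩
    · exact ⟨0, fun _ => f, rfl, fun i => Or.inl hf⟩
    · exact ⟨n, fs, hlast, hcond⟩
  set avoidAll : Set Dom := adom I ∪ ⋃ j : Fin (n + 1), (fs j).consts with havA
  have hfinA : avoidAll.Finite :=
    (adom_finite hI).union (Set.finite_iUnion fun j => Set.finite_range _)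
  obtain ⟨f', hstep, hQ⟩ := h avoidAll hfinA
  refine ⟨f', hQ, Or.inr ⟨n + 1, Fin.snoc fs f', by simp, ?_⟩⟩
  intro i
  induction i using Fin.lastCases with
  | last =>
    refine Or.inr ⟨Fin.castSucc (Fin.last n), Fin.castSucc_lt_last _, ?_⟩
    rw [Fin.snoc_castSucc, Fin.snoc_last, hlast]
    refine chaseStep_mono ?_ hstep
    rintro c (hc | ⟨j', _, hj'⟩)
    · exact Or.inl hc
    · rcases Fin.exists_castSucc_eq.2 (Fin.ne_last_of_lt (by assumption)) with ⟨j₀, rfl⟩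
      rw [Fin.snoc_castSucc] at hj'
      exact Or.inr (Set.mem_iUnion.2 ⟨j₀, hj'⟩)
  | cast i₀ =>
    rw [Fin.snoc_castSucc]
    rcases hcond i₀ with hmem | ⟨j₀, hlt, hcs⟩
    · exact Or.inl hmem
    · refine Or.inr ⟨Fin.castSucc j₀, Fin.castSucc_lt_castSucc_iff.2 hlt, ?_⟩
      rw [Fin.snoc_castSucc]
      refine chaseStep_mono ?_ hcs
      rintro c (hc | ⟨j', hj'lt, hj'⟩)
      · exact Or.inl hc
      · have hne : j' ≠ Fin.last (n + 1) :=
          Fin.ne_last_of_lt (lt_of_lt_of_le hj'lt (Fin.le_last _))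
        rcases Fin.exists_castSucc_eq.2 hne with ⟨j₀', rfl⟩
        rw [Fin.snoc_castSucc] at hj'
        exact Or.inr ⟨j₀', Fin.castSucc_lt_castSucc_iff.1 hj'lt, hj'⟩

end Aux

/-- Completeness of the chase rules w.r.t. entailment:
if `Σ ∪ I ⊨ f` then `Σ ∪ I ⊢_R f`. -/
theorem chase_rules_complete {Rel Dom : Type} [Finite Rel] [Countable Dom] [Infinite Dom]
    (arity : Rel → ℕ) (Sg : Set (Dep Rel arity)) (hSg : Sg.Finite)
    (I : Set (Fact Rel arity Dom)) (hI : I.Finite)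
    (f : Fact Rel arity Dom) (hf : entailsFact Sg I f) :
    derives Sg I f := by
  set D : Set (Fact Rel arity Dom) := {g | derives Sg I g} with hD
  have hmodel : isModel Sg I (strucOf D) := by
    constructor
    · intro d hd
      cases d with
      | id R R' h =>
        intro t ht
        have hext := derives_extend hI ht
          (fun g => g = Fact.mk R' (fun i => t (Fin.cast h i)))
          (fun avoid _ => ⟨_, Or.inl ⟨R, R', h, t, hd, rfl, rfl⟩, rfl⟩)
        obtain ⟨f', rfl, hd'⟩ := hext
        exact hd'
      | tgd R R' m h =>
        intro t ht
        have hext := derives_extend hI ht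
          (fun g => ∃ s : Fin m → Dom,
            g = Fact.mk R' (fun i => Fin.append t s (Fin.cast h i)))
          (fun avoid hfin => by
            obtain ⟨s, hinj, hfresh⟩ := exists_fresh avoid hfin m
            exact ⟨_, Or.inr ⟨R, R', m, h, t, s, hd, rfl, hinj, hfresh, rfl⟩,
              s, rfl⟩)
        obtain ⟨f', ⟨s, rfl⟩, hd'⟩ := hext
        exact ⟨s, hd'⟩
    · intro g hg
      exact Or.inl hg
  have := hf (strucOf D) hmodel
  obtain ⟨R, args⟩ := f
  exact this

end ChaseBagSet
end

section
/- Universality of the chase: let (Σ, I) be an incomplete database over schema R with Σ a finite set of inclusion dependencies and tuple-generating dependencies. For every relational structure M over R that is a model of Σ ∪ I, there exists a homomorphism h from chase(Σ, I) to M that is the identity on the constants occurring in I, i.e., a map h on constants such that for every fact R(c⃗) ∈ chase(Σ, I), the tuple h(c⃗) belongs to the interpretation of R in M, and h(c) = c for every constant c occurring in I. -/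
/-! Formalization of incomplete databases, IDs/TGDs, chase rules, derivability,
chase sequences, FO structures & entailment, and (unions of) conjunctive queries. -/

namespace ChaseBagSet

variable {Rel : Type} {arity : Rel → ℕ} {Dom : Type}

/-- Universality of the chase: every model `M` of `Σ ∪ I` admits a
homomorphism `h` from `chase(Σ, I)` that is the identity on (i.e. agrees with the
interpretation of) the constants occurring in `I`. -/
theorem chase_universal {Rel Dom : Type} [Finite Rel] [Countable Dom] [Infinite Dom]
    (arity : Rel → ℕ) (Sg : Set (Dep Rel arity)) (hSg : Sg.Finite)
    (I : Set (Fact Rel arity Dom)) (hI : I.Finite)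
    (C : ChaseSeq Sg I) (M : Struc Rel arity Dom) (hM : isModel Sg I M) :
    ∃ h : Dom → M.carrier,
      (∀ f ∈ C.chase, M.interp f.rel (fun i => h (f.args i))) ∧
      (∀ c ∈ adom I, h c = M.constMap c) := by
  classical
  -- one-step extension lemma
  have step : ∀ (i : ℕ) (g : Dom → M.carrier), ∃ g' : Dom → M.carrier,
      (∀ c ∈ adom (C.level i), g' c = g c) ∧
      ((∀ f ∈ C.level i, M.interp f.rel (fun k => g (f.args k))) →
        ∀ f ∈ C.level (i+1), M.interp f.rel (fun k => g' (f.args k))) := by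
    intro i g
    by_cases hinv : ∀ f ∈ C.level i, M.interp f.rel (fun k => g (f.args k))
    · rcases C.succ i with heq | ⟨fnew, ⟨g0, hg0, hstep⟩, heq⟩
      · exact ⟨g, fun c _ => rfl, fun _ => by rw [heq]; exact hinv⟩
      · rcases hstep with hid | htgd
        · -- ID step
          obtain ⟨R, R', hEq, t, hdep, hg0eq, hfeq⟩ := hid
          subst hg0eq; subst hfeq
          refine ⟨g, fun c _ => rfl, fun _ => ?_⟩
          rw [heq]
          intro f hf
          rcases hf with hf | hf
          · exact hinv f hf
          · rw [Set.mem_singleton_iff] at hf; subst hf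
            have hR : M.interp R (fun l => g (t l)) := hinv _ hg0
            exact (hM.1 _ hdep) (fun l => g (t l)) hR
        · -- TGD step
          obtain ⟨R, R', m, hEq, t, s, hdep, hg0eq, hsinj, hfresh, hfeq⟩ := htgd
          subst hg0eq; subst hfeq
          have hR : M.interp R (fun l => g (t l)) := hinv _ hg0
          obtain ⟨ss, hss⟩ := (hM.1 _ hdep) (fun l => g (t l)) hR
          set g' : Dom → M.carrier :=
            fun c => if hc : ∃ k, s k = c then ss hc.choose else g c with hg'def
          have hg'adom : ∀ c ∈ adom (C.level i), g' c = g c := by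
            intro c hc
            show (if hc : ∃ k, s k = c then ss hc.choose else g c) = g c
            rw [dif_neg]
            rintro ⟨k, hk⟩
            subst hk
            exact hfresh k hc
          have hg's : ∀ k, g' (s k) = ss k := by
            intro k
            have hk : ∃ k', s k' = s k := ⟨k, rfl⟩
            rw [hg'def]
            simp only [dif_pos hk]
            exact congrArg ss (hsinj hk.choose_spec)
          refine ⟨g', hg'adom, fun _ => ?_⟩
          rw [heq]
          intro f hf
          rcases hf with hf | hf
          · have : (fun k => g' (f.args k)) = fun k => g (f.args k) :=
              funext fun k => hg'adom _ ⟨f, hf, ⟨k, rfl⟩⟩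
            rw [this]; exact hinv f hf
          · rw [Set.mem_singleton_iff] at hf; subst hf
            have key : ∀ j : Fin (arity R + m),
                g' (Fin.append t s j) = Fin.append (fun l => g (t l)) ss j := by
              intro j
              refine Fin.addCases (fun l => ?_) (fun k => ?_) j
              · rw [Fin.append_left, Fin.append_left]
                exact hg'adom _ ⟨Fact.mk R t, hg0, ⟨l, rfl⟩⟩
              · rw [Fin.append_right, Fin.append_right]
                exact hg's k
            have : (fun k => g' (Fin.append t s (Fin.cast hEq k)))
                = fun k => Fin.append (fun l => g (t l)) ss (Fin.cast hEq k) :=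
              funext fun k => key _
            show M.interp R' (fun k => g' (Fin.append t s (Fin.cast hEq k)))
            rw [this]; exact hss
    · exact ⟨g, fun c _ => rfl, fun h' => absurd h' hinv⟩
  -- define the sequence of partial homomorphisms
  let H : ℕ → (Dom → M.carrier) :=
    fun n => Nat.rec M.constMap (fun i g => (step i g).choose) n
  have Hagree1 : ∀ i, ∀ c ∈ adom (C.level i), H (i+1) c = H i c :=
    fun i => (step i (H i)).choose_spec.1
  have Hsat : ∀ i, ∀ f ∈ C.level i, M.interp f.rel (fun k => H i (f.args k)) := by
    intro i
    induction i with
    | zero =>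
        rw [C.zero]
        intro f hf
        exact hM.2 f hf
    | succ i ih => exact (step i (H i)).choose_spec.2 ih
  -- levels are monotone
  have mono : ∀ i j, i ≤ j → C.level i ⊆ C.level j := by
    intro i j hij
    induction j, hij using Nat.le_induction with
    | base => exact subset_rfl
    | succ j hij ih =>
        refine ih.trans ?_
        rcases C.succ j with heq | ⟨fnew, _, heq⟩
        · rw [heq]
        · rw [heq]; exact Set.subset_union_left
  have amono : ∀ i j, i ≤ j → adom (C.level i) ⊆ adom (C.level j) := by
    rintro i j hij c ⟨f, hf, hc⟩
    exact ⟨f, mono i j hij hf, hc⟩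
  have agree : ∀ i j, i ≤ j → ∀ c ∈ adom (C.level i), H j c = H i c := by
    intro i j hij
    induction j, hij using Nat.le_induction with
    | base => intro c _; rfl
    | succ j hij ih =>
        intro c hc
        rw [Hagree1 j c (amono i j hij hc)]
        exact ih c hc
  -- the homomorphism
  refine ⟨fun c => if hc : ∃ i, c ∈ adom (C.level i) then H (Nat.find hc) c
      else M.constMap c, ?_, ?_⟩
  · intro f hf
    obtain ⟨i, hfi⟩ := Set.mem_iUnion.mp hf
    have harg : ∀ k : Fin (arity f.rel),
        (if hc : ∃ i, f.args k ∈ adom (C.level i) then H (Nat.find hc) (f.args k)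
          else M.constMap (f.args k)) = H i (f.args k) := by
      intro k
      have hc : ∃ j, f.args k ∈ adom (C.level j) := ⟨i, f, hfi, ⟨k, rfl⟩⟩
      rw [dif_pos hc]
      exact (agree (Nat.find hc) i (Nat.find_min' hc ⟨f, hfi, ⟨k, rfl⟩⟩)
        (f.args k) (Nat.find_spec hc)).symm
    have : (fun k => if hc : ∃ i, f.args k ∈ adom (C.level i)
        then H (Nat.find hc) (f.args k) else M.constMap (f.args k))
        = fun k => H i (f.args k) := funext harg
    rw [this]
    exact Hsat i f hfi
  · intro c hc
    have hc0 : c ∈ adom (C.level 0) := by rw [C.zero]; exact hc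
    have hce : ∃ i, c ∈ adom (C.level i) := ⟨0, hc0⟩
    show (if hc : ∃ i, c ∈ adom (C.level i) then H (Nat.find hc) c
      else M.constMap c) = M.constMap c
    rw [dif_pos hce]
    have : Nat.find hce = 0 := Nat.le_zero.mp (Nat.find_min' hce hc0)
    rw [this]
    rfl

end ChaseBagSet
end
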